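/- Let A be an associative unital ℂ-algebra, q ∈ ℂ nonzero, g ∈ ℂ, N ≥ 1, and for n = 1,…,N let uₙ, vₙ ∈ A be invertible with uₙ·vₙ = q²·vₙ·uₙ, with elements at distinct sites commuting. For z ∈ ℂ∖{0} let Lₙ(z) ∈ M₂(A) have entries Lₙ(z)₁₁ = z·1 − z⁻¹·vₙ, Lₙ(z)₁₂ = g·uₙ⁻¹, Lₙ(z)₂₁ = −g·q⁻¹·uₙ·vₙ, Lₙ(z)₂₂ = 0, and let A_N(z) = (L_N(z)·…·L₁(z))₁₁. Then there exist elements h₀, h₁, …, h_N ∈ A (the Hamiltonians of the N-particle open relativistic Toda chain) such that for every z ∈ ℂ∖{0}: A_N(z) = Σ_{k=0}^N (−1)^k·z^{N−2k}·h_k, with h₀ = 1, h_N = v_N·v_{N−1}·…·v₁, h₁ = Σ_{n=1}^{N−1} (1 + q⁻¹·g²·uₙ·u_{n+1}⁻¹)·vₙ + v_N, and h_{N−1} = v_N·…·v₁·( v₁⁻¹ + Σ_{n=2}^{N} (1 + q⁻¹·g²·u_{n−1}·uₙ⁻¹)·vₙ⁻¹ ). -/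

import Mathlib

/-!
Write `A_n(z)` for the `(1,1)` entry of `T_n(z)`. Since `L(z)₂₂ = 0`, the `(2,1)` entry of
`T_{n+1}(z)` is `-g q⁻¹ u_{n+1} v_{n+1} A_n(z)`, so the `(1,1)` entries obey the three-term
recurrence `A_{n+2} = (z - z⁻¹ v_{n+2}) A_{n+1} - q⁻¹ g² u_{n+2}⁻¹ u_{n+1} v_{n+1} A_n`.
Multiplication by `z` and by `-z⁻¹` act on expansions `Σ_k (-1)^k z^{n-2k} h_k` as degree shifts,
so `A_n` has such an expansion whose coefficients `h^{(n)}_k` satisfy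
`h^{(n+2)}_{k+1} = h^{(n+1)}_{k+1} + v_{n+2} h^{(n+1)}_k + X_{n+1} h^{(n)}_k` with
`X_{n+1} = q⁻¹ g² u_{n+2}⁻¹ u_{n+1} v_{n+1}`.
The formulas for `h_0`, `h_1`, `h_n` and `h_{n-1}` then follow by induction on `n`; for `h_{n-1}`
the factor `q²` picked up when `u_{n+2}⁻¹` passes `v_{n+2}⁻¹` cancels the one from the Weyl
relation of `(u_{n+1}, v_{n+1})`.
-/

/-- The quantum Lax matrix of the relativistic Toda chain, built from a Weyl
pair `u, v` (with `u·v = q²·v·u`) and coupling constant `g`. -/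
noncomputable def laxMatrix {A : Type*} [Ring A] [Algebra ℂ A]
    (q g z : ℂ) (u v : Aˣ) : Matrix (Fin 2) (Fin 2) A :=
  !![z • (1 : A) - z⁻¹ • (v : A), g • (↑u⁻¹ : A);
     (-(g * q⁻¹)) • ((u : A) * (v : A)), 0]

theorem List.prod_reverse_map_range_succ {M : Type*} [Monoid M] (f : ℕ → M) (n : ℕ) :
    ((List.range (n + 1)).map f).reverse.prod = f n * ((List.range n).map f).reverse.prod := by
  simp [List.range_succ]

section DescendingProd

variable {M : Type*} [Monoid M] (v : ℕ → Mˣ)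

noncomputable def descendingProd (n : ℕ) : M :=
  ((List.range n).map fun m => (v (m + 1) : M)).reverse.prod

theorem descendingProd_succ (n : ℕ) : descendingProd v (n + 1) = v (n + 1) * descendingProd v n :=
  List.prod_reverse_map_range_succ _ n

theorem Commute.descendingProd_right {x : M} {n : ℕ}
    (h : ∀ m, 1 ≤ m → m ≤ n → Commute x (v m)) : Commute x (descendingProd v n) :=
  Commute.list_prod_right _ _ <| by
    simp only [List.mem_reverse, List.mem_map, List.mem_range]
    rintro _ ⟨m, hm, rfl⟩
    exact h (m + 1) (by omega) (by omega)

end DescendingProd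

section Weyl

variable {A : Type*} [Ring A] [Algebra ℂ A]

theorem inv_mul_inv_eq_smul_of_mul_eq_smul {c d : Aˣ} {r : ℂ} (h : (c : A) * d = r • (d * c)) :
    (↑c⁻¹ : A) * ↑d⁻¹ = r • ((↑d⁻¹ : A) * ↑c⁻¹) := by
  calc (↑c⁻¹ : A) * ↑d⁻¹ = ↑c⁻¹ * ↑d⁻¹ * (c * d) * (↑d⁻¹ * ↑c⁻¹) := by simp [mul_assoc]
    _ = r • ((↑d⁻¹ : A) * ↑c⁻¹) := by rw [h]; simp [mul_assoc]

/-- Commuting `c⁻¹` past `d⁻¹` produces the Weyl factor `q²` of the pair `(c, d)`, which is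
exactly the factor relating `a * P` and `P * a`. -/
theorem inv_mul_mul_eq_conj {q : ℂ} {a : A} {P : A} {c d : Aˣ}
    (hcd : (c : A) * d = q ^ 2 • (d * c)) (haP : a * P = q ^ 2 • (P * a))
    (hdP : Commute (d : A) P) (hda : Commute (d : A) a) (hca : Commute (c : A) a)
    (hcP : Commute (c : A) P) :
    (↑c⁻¹ : A) * a * P = d * P * a * ↑c⁻¹ * ↑d⁻¹ := by
  calc (↑c⁻¹ : A) * a * P = a * P * ↑c⁻¹ := by
        rw [mul_assoc, ((hca.units_inv_left).mul_right hcP.units_inv_left).eq]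
    _ = q ^ 2 • (P * a * ↑c⁻¹) := by rw [haP, smul_mul_assoc]
    _ = d * (P * a) * (q ^ 2 • ((↑d⁻¹ : A) * ↑c⁻¹)) := by
        rw [(hdP.mul_right hda).eq, mul_smul_comm]
        simp [mul_assoc]
    _ = d * P * a * ↑c⁻¹ * ↑d⁻¹ := by
        rw [← inv_mul_inv_eq_smul_of_mul_eq_smul hcd]
        simp only [mul_assoc]

end Weyl

section SignedLaurentSum

variable {A : Type*} [Ring A] [Algebra ℂ A]

noncomputable def signedLaurentSum (n : ℕ) (c : ℕ → A) (z : ℂ) : A :=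
  ∑ k ∈ Finset.range (n + 1), ((-1 : ℂ) ^ k * z ^ ((n : ℤ) - 2 * k)) • c k

theorem signedLaurentSum_zero (c : ℕ → A) (z : ℂ) : signedLaurentSum 0 c z = c 0 := by
  simp [signedLaurentSum]

theorem signedLaurentSum_add (n : ℕ) (c d : ℕ → A) (z : ℂ) :
    signedLaurentSum n (fun k => c k + d k) z
      = signedLaurentSum n c z + signedLaurentSum n d z := by
  simp only [signedLaurentSum, smul_add, Finset.sum_add_distrib]

theorem signedLaurentSum_mul_left (n : ℕ) (x : A) (c : ℕ → A) (z : ℂ) :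
    signedLaurentSum n (fun k => x * c k) z = x * signedLaurentSum n c z := by
  simp only [signedLaurentSum, Finset.mul_sum, mul_smul_comm]

theorem signedLaurentSum_succ_of_eq_zero {n : ℕ} {c : ℕ → A} (hc : c (n + 1) = 0) {z : ℂ}
    (hz : z ≠ 0) : signedLaurentSum (n + 1) c z = z • signedLaurentSum n c z := by
  rw [signedLaurentSum, Finset.sum_range_succ, hc, smul_zero, add_zero, signedLaurentSum,
    Finset.smul_sum]
  refine Finset.sum_congr rfl fun k _ => ?_
  rw [smul_smul, show ((n + 1 : ℕ) : ℤ) - 2 * k = 1 + ((n : ℤ) - 2 * k) by push_cast; ring,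
    zpow_add₀ hz, zpow_one]
  ring_nf

theorem signedLaurentSum_succ {n : ℕ} {b c d : ℕ → A} (hc : c (n + 1) = 0) (hb₀ : b 0 = c 0)
    (hb : ∀ k, b (k + 1) = c (k + 1) + d k) {z : ℂ} (hz : z ≠ 0) :
    signedLaurentSum (n + 1) b z = z • signedLaurentSum n c z - z⁻¹ • signedLaurentSum n d z := by
  have hshift : signedLaurentSum (n + 1) b z
      = signedLaurentSum (n + 1) c z
        + ∑ k ∈ Finset.range (n + 1), ((-1 : ℂ) ^ (k + 1) * z ^ ((n : ℤ) - 2 * k - 1)) • d k := by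
    rw [signedLaurentSum, signedLaurentSum, Finset.sum_range_succ' (M := A) (n := n + 1),
      Finset.sum_range_succ' (M := A) (n := n + 1)]
    simp only [hb, hb₀, smul_add, Finset.sum_add_distrib]
    rw [add_right_comm]
    congr 1
    refine Finset.sum_congr rfl fun k _ => ?_
    rw [show ((n + 1 : ℕ) : ℤ) - 2 * ((k + 1 : ℕ) : ℤ) = n - 2 * k - 1 by push_cast; ring]
  rw [hshift, signedLaurentSum_succ_of_eq_zero hc hz, sub_eq_add_neg]
  congr 1
  rw [signedLaurentSum, Finset.smul_sum, ← Finset.sum_neg_distrib]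
  refine Finset.sum_congr rfl fun k _ => ?_
  rw [smul_smul, ← neg_smul, zpow_sub₀ hz, zpow_one, pow_succ]
  congr 1
  ring

end SignedLaurentSum

section OpenToda

variable {A : Type*} [Ring A] [Algebra ℂ A] (q g : ℂ) (u v : ℕ → Aˣ)

noncomputable def todaMonodromy (z : ℂ) (n : ℕ) : Matrix (Fin 2) (Fin 2) A :=
  ((List.range n).map fun m => laxMatrix q g z (u (m + 1)) (v (m + 1))).reverse.prod

theorem todaMonodromy_succ (z : ℂ) (n : ℕ) :
    todaMonodromy q g u v z (n + 1)
      = laxMatrix q g z (u (n + 1)) (v (n + 1)) * todaMonodromy q g u v z n :=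
  List.prod_reverse_map_range_succ _ n

theorem todaMonodromy_succ_zero_zero (z : ℂ) (n : ℕ) :
    todaMonodromy q g u v z (n + 1) 0 0
      = (z • 1 - z⁻¹ • (v (n + 1) : A)) * todaMonodromy q g u v z n 0 0
        + g • (↑(u (n + 1))⁻¹ : A) * todaMonodromy q g u v z n 1 0 := by
  simp [todaMonodromy_succ, Matrix.mul_apply, laxMatrix]

theorem todaMonodromy_succ_one_zero (z : ℂ) (n : ℕ) :
    todaMonodromy q g u v z (n + 1) 1 0
      = (-(g * q⁻¹)) • ((u (n + 1) : A) * v (n + 1)) * todaMonodromy q g u v z n 0 0 := by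
  simp [todaMonodromy_succ, Matrix.mul_apply, laxMatrix]

theorem todaMonodromy_add_two_zero_zero (z : ℂ) (n : ℕ) :
    todaMonodromy q g u v z (n + 2) 0 0
      = (z • 1 - z⁻¹ • (v (n + 2) : A)) * todaMonodromy q g u v z (n + 1) 0 0
        - (q⁻¹ * g ^ 2) • ((↑(u (n + 2))⁻¹ : A) * u (n + 1) * v (n + 1))
          * todaMonodromy q g u v z n 0 0 := by
  rw [todaMonodromy_succ_zero_zero, todaMonodromy_succ_one_zero]
  simp only [smul_mul_assoc, mul_smul_comm, smul_smul, mul_assoc]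
  module

/-- `todaHamiltonian q g u v n k` is the Hamiltonian `h_k` of the `n`-site chain. -/
noncomputable def todaHamiltonian : ℕ → ℕ → A
  | _, 0 => 1
  | 0, _ + 1 => 0
  | 1, k + 1 => v 1 * todaHamiltonian 0 k
  | n + 2, k + 1 => todaHamiltonian (n + 1) (k + 1) + v (n + 2) * todaHamiltonian (n + 1) k
      + (q⁻¹ * g ^ 2) • ((↑(u (n + 2))⁻¹ : A) * u (n + 1) * v (n + 1)) * todaHamiltonian n k

theorem todaHamiltonian_zero_right (n : ℕ) : todaHamiltonian q g u v n 0 = 1 := by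
  cases n <;> rfl

theorem todaHamiltonian_one_succ (k : ℕ) :
    todaHamiltonian q g u v 1 (k + 1) = v 1 * todaHamiltonian q g u v 0 k := rfl

theorem todaHamiltonian_add_two_succ (n k : ℕ) :
    todaHamiltonian q g u v (n + 2) (k + 1) = todaHamiltonian q g u v (n + 1) (k + 1)
      + v (n + 2) * todaHamiltonian q g u v (n + 1) k
      + (q⁻¹ * g ^ 2) • ((↑(u (n + 2))⁻¹ : A) * u (n + 1) * v (n + 1))
        * todaHamiltonian q g u v n k :=
  rfl

theorem todaHamiltonian_eq_zero_of_lt : ∀ {n k : ℕ}, n < k → todaHamiltonian q g u v n k = 0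
  | 0, _ + 1, _ => rfl
  | 1, k + 1, h => by
    rw [todaHamiltonian, todaHamiltonian_eq_zero_of_lt (by omega), mul_zero]
  | n + 2, k + 1, h => by
    rw [todaHamiltonian, todaHamiltonian_eq_zero_of_lt (by omega),
      todaHamiltonian_eq_zero_of_lt (by omega), todaHamiltonian_eq_zero_of_lt (by omega)]
    simp

theorem todaMonodromy_zero_zero_eq_signedLaurentSum {z : ℂ} (hz : z ≠ 0) (n : ℕ) :
    todaMonodromy q g u v z n 0 0 = signedLaurentSum n (todaHamiltonian q g u v n) z := by
  induction n using Nat.twoStepInduction with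
  | zero => simp [todaMonodromy, signedLaurentSum_zero, todaHamiltonian_zero_right]
  | one =>
    have hexp := signedLaurentSum_succ (n := 0) (b := todaHamiltonian q g u v 1)
      (c := todaHamiltonian q g u v 0) (d := fun k => v 1 * todaHamiltonian q g u v 0 k)
      rfl rfl (fun _ => (zero_add _).symm) hz
    rw [hexp, todaMonodromy_succ_zero_zero, signedLaurentSum_mul_left, signedLaurentSum_zero]
    simp [todaMonodromy, todaHamiltonian_zero_right]
  | more n ih₀ ih₁ =>
    have hexp := signedLaurentSum_succ (n := n + 1) (b := todaHamiltonian q g u v (n + 2))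
      (c := todaHamiltonian q g u v (n + 1))
      (d := fun k => v (n + 2) * todaHamiltonian q g u v (n + 1) k
        + (q⁻¹ * g ^ 2) • ((↑(u (n + 2))⁻¹ : A) * u (n + 1) * v (n + 1))
          * todaHamiltonian q g u v n k)
      (todaHamiltonian_eq_zero_of_lt q g u v (n + 1).lt_succ_self) rfl
      (fun k => add_assoc _ _ _) hz
    rw [hexp, todaMonodromy_add_two_zero_zero, ih₀, ih₁, signedLaurentSum_add,
      signedLaurentSum_mul_left, signedLaurentSum_mul_left,
      signedLaurentSum_succ_of_eq_zero
        (todaHamiltonian_eq_zero_of_lt q g u v n.lt_succ_self) hz]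
    simp only [sub_mul, smul_mul_assoc, one_mul, mul_smul_comm, smul_add, smul_smul,
      inv_mul_cancel_left₀ hz]
    abel

theorem todaHamiltonian_self (n : ℕ) : todaHamiltonian q g u v n n = descendingProd v n := by
  induction n using Nat.twoStepInduction with
  | zero => rfl
  | one => simp [todaHamiltonian_one_succ, todaHamiltonian_zero_right, descendingProd]
  | more n _ ih =>
    rw [todaHamiltonian_add_two_succ, ih,
      todaHamiltonian_eq_zero_of_lt q g u v (n + 1).lt_succ_self,
      todaHamiltonian_eq_zero_of_lt q g u v n.lt_succ_self, mul_zero, zero_add, add_zero]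
    exact (descendingProd_succ v (n + 1)).symm

theorem todaHamiltonian_succ_one {n : ℕ} (hu : ∀ m < n, Commute (u (m + 1) : A) (u (m + 2))) :
    todaHamiltonian q g u v (n + 1) 1
      = (∑ m ∈ Finset.range n,
          (1 + (q⁻¹ * g ^ 2) • ((u (m + 1) : A) * ↑(u (m + 2))⁻¹)) * v (m + 1)) + v (n + 1) := by
  induction n with
  | zero => simp [todaHamiltonian_one_succ, todaHamiltonian_zero_right]
  | succ n ih =>
    rw [todaHamiltonian_add_two_succ, ih fun m hm => hu m (by omega), todaHamiltonian_zero_right,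
      todaHamiltonian_zero_right, Finset.sum_range_succ, mul_one, mul_one,
      ← ((hu n (by omega)).units_inv_right).eq]
    simp only [add_mul, one_mul, smul_mul_assoc, mul_assoc]
    abel

theorem todaHamiltonian_succ_self {N : ℕ}
    (hWeyl : ∀ n, 1 ≤ n → n ≤ N → (u n : A) * v n = q ^ 2 • ((v n : A) * u n))
    (huu : ∀ n m, 1 ≤ n → n ≤ N → 1 ≤ m → m ≤ N → n ≠ m → Commute (u n : A) (u m))
    (huv : ∀ n m, 1 ≤ n → n ≤ N → 1 ≤ m → m ≤ N → n ≠ m → Commute (u n : A) (v m))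
    (hvv : ∀ n m, 1 ≤ n → n ≤ N → 1 ≤ m → m ≤ N → n ≠ m → Commute (v n : A) (v m))
    {n : ℕ} (hn : n + 1 ≤ N) :
    todaHamiltonian q g u v (n + 1) n
      = descendingProd v (n + 1) * (↑(v 1)⁻¹ + ∑ m ∈ Finset.range n,
          (1 + (q⁻¹ * g ^ 2) • ((u (m + 1) : A) * ↑(u (m + 2))⁻¹)) * ↑(v (m + 2))⁻¹) := by
  induction n with
  | zero => simp [todaHamiltonian_zero_right, descendingProd]
  | succ n ih =>
    have hdP : Commute (v (n + 2) : A) (descendingProd v (n + 1)) :=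
      Commute.descendingProd_right v fun m h1 h2 => hvv _ _ (by omega) hn h1 (by omega) (by omega)
    have haP : (u (n + 1) : A) * descendingProd v (n + 1)
        = q ^ 2 • (descendingProd v (n + 1) * u (n + 1)) := by
      have hP : Commute (u (n + 1) : A) (descendingProd v n) :=
        Commute.descendingProd_right v fun m h1 h2 =>
          huv _ _ (by omega) (by omega) h1 (by omega) (by omega)
      rw [descendingProd_succ, ← mul_assoc, hWeyl (n + 1) (by omega) (by omega), smul_mul_assoc,
        mul_assoc, hP.eq, mul_assoc]
    have hexchange := inv_mul_mul_eq_conj (hWeyl (n + 2) (by omega) hn) haP hdP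
      ((huv _ _ (by omega) (by omega) (by omega) hn (by omega)).symm)
      (huu _ _ (by omega) hn (by omega) (by omega) (by omega))
      (Commute.descendingProd_right v fun m h1 h2 => huv _ _ (by omega) hn h1 (by omega) (by omega))
    rw [todaHamiltonian_add_two_succ, ih (by omega), todaHamiltonian_self, todaHamiltonian_self,
      Finset.sum_range_succ, descendingProd_succ v (n + 1), smul_mul_assoc,
      mul_assoc (_ * _ : A) (v (n + 1) : A), ← descendingProd_succ, hexchange]
    have hconj : (v (n + 2) : A) * descendingProd v (n + 1) * ↑(v (n + 2))⁻¹
        = descendingProd v (n + 1) := by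
      rw [hdP.eq, Units.mul_inv_cancel_right]
    simp only [mul_add, add_mul, one_mul, mul_smul_comm, smul_mul_assoc, ← mul_assoc, hconj]
    abel

end OpenToda

theorem open_toda_generating_function (A : Type*) [Ring A] [Algebra ℂ A]
    (q g : ℂ) (N : ℕ) (hN : 1 ≤ N) (u v : ℕ → Aˣ)
    (hWeyl : ∀ n, 1 ≤ n → n ≤ N →
      (u n : A) * (v n : A) = q ^ 2 • ((v n : A) * (u n : A)))
    (huu : ∀ n m, 1 ≤ n → n ≤ N → 1 ≤ m → m ≤ N → n ≠ m →
      (u n : A) * (u m : A) = (u m : A) * (u n : A))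
    (huv : ∀ n m, 1 ≤ n → n ≤ N → 1 ≤ m → m ≤ N → n ≠ m →
      (u n : A) * (v m : A) = (v m : A) * (u n : A))
    (hvv : ∀ n m, 1 ≤ n → n ≤ N → 1 ≤ m → m ≤ N → n ≠ m →
      (v n : A) * (v m : A) = (v m : A) * (v n : A)) :
    ∃ h : ℕ → A,
      (∀ z : ℂ, z ≠ 0 →
        (((List.range N).map fun n => laxMatrix q g z (u (n + 1)) (v (n + 1))).reverse).prod 0 0
          = ∑ k ∈ Finset.range (N + 1), ((-1 : ℂ) ^ k * z ^ ((N : ℤ) - 2 * k)) • h k) ∧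
      h 0 = 1 ∧
      h N = (((List.range N).map fun n => (v (n + 1) : A)).reverse).prod ∧
      h 1 = (∑ n ∈ Finset.range (N - 1),
          (1 + (q⁻¹ * g ^ 2) • ((u (n + 1) : A) * (↑(u (n + 2))⁻¹ : A))) * (v (n + 1) : A))
        + (v N : A) ∧
      h (N - 1) = (((List.range N).map fun n => (v (n + 1) : A)).reverse).prod *
        ((↑(v 1)⁻¹ : A) + ∑ n ∈ Finset.range (N - 1),
          (1 + (q⁻¹ * g ^ 2) • ((u (n + 1) : A) * (↑(u (n + 2))⁻¹ : A))) *
            (↑(v (n + 2))⁻¹ : A)) := by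
  obtain ⟨n, rfl⟩ : ∃ n, N = n + 1 := ⟨N - 1, by omega⟩
  refine ⟨todaHamiltonian q g u v (n + 1),
    fun z hz => todaMonodromy_zero_zero_eq_signedLaurentSum q g u v hz (n + 1),
    todaHamiltonian_zero_right q g u v (n + 1), todaHamiltonian_self q g u v (n + 1), ?_, ?_⟩
  · rw [Nat.add_sub_cancel]
    exact todaHamiltonian_succ_one q g u v
      fun m hm => huu (m + 1) (m + 2) (by omega) (by omega) (by omega) (by omega) (by omega)
  · rw [Nat.add_sub_cancel]
    exact todaHamiltonian_succ_self q g u v hWeyl huu huv hvv le_rfl
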